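/- For any T > 0, the convolution of ReLU with the logistic density ℓ_T satisfies (ReLU * ℓ_T)(a) = T·ln(1 + e^{a/T}) for all real a. -/

import Mathlib

open MeasureTheory

/-- The logistic density: ℓ_T(p) = e^{p/T}/(T(e^{p/T}+1)²). -/
noncomputable def logisticDen (T p : ℝ) : ℝ :=
  Real.exp (p / T) / (T * (Real.exp (p / T) + 1) ^ 2)

open Real Filter Topology Set

/-!
Since `ℓ_T(x) = σ'(x/T)/T` for the sigmoid `σ` and `σ` is the derivative of
`softplus x = log (1 + eˣ)`, the integrand `p · ℓ_T(a - p)` of `∫₀^∞` has the primitive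
`-p · σ((a - p)/T) - T · softplus((a - p)/T)`, which vanishes at `+∞` and equals
`-T · softplus(a/T)` at `0`.
-/

noncomputable def softplus (x : ℝ) : ℝ := log (1 + exp x)

lemma sigmoid_eq_exp_div (x : ℝ) : sigmoid x = exp x / (1 + exp x) := by
  rw [sigmoid_def, exp_neg]
  field_simp
  ring

lemma hasDerivAt_softplus (x : ℝ) : HasDerivAt softplus (sigmoid x) x := by
  rw [sigmoid_eq_exp_div]
  exact ((hasDerivAt_exp x).const_add 1).log (by positivity)

lemma tendsto_softplus_atBot : Tendsto softplus atBot (𝓝 0) := by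
  have h := (tendsto_exp_atBot.const_add 1).log (by norm_num : (1 : ℝ) + 0 ≠ 0)
  rwa [add_zero, log_one] at h

lemma tendsto_mul_exp_atBot : Tendsto (fun x => x * exp x) atBot (𝓝 0) := by
  have h := ((tendsto_pow_mul_exp_neg_atTop_nhds_zero 1).comp tendsto_neg_atBot_atTop).neg
  simpa using h

lemma tendsto_mul_sigmoid_atBot : Tendsto (fun x => x * sigmoid x) atBot (𝓝 0) := by
  -- `x σ(x) = x eˣ σ(-x)`
  have h := tendsto_mul_exp_atBot.mul (tendsto_sigmoid_atTop.comp tendsto_neg_atBot_atTop)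
  simp only [zero_mul] at h
  refine h.congr fun x => ?_
  simp only [Function.comp_apply, ← sigmoid_mul_rexp_neg, exp_neg]
  field_simp

lemma logisticDen_eq_sigmoid (T x : ℝ) :
    logisticDen T x = sigmoid (x / T) * (1 - sigmoid (x / T)) / T := by
  rw [logisticDen, sigmoid_eq_exp_div]
  field_simp
  ring

lemma logisticDen_nonneg {T : ℝ} (hT : 0 ≤ T) (x : ℝ) : 0 ≤ logisticDen T x := by
  unfold logisticDen
  positivity

lemma integral_max_zero_mul (f : ℝ → ℝ) :
    ∫ p, max 0 p * f p = ∫ p in Ioi 0, p * f p := by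
  rw [← integral_indicator measurableSet_Ioi]
  congr 1 with p
  rcases le_or_gt p 0 with hp | hp
  · simp [hp]
  · simp [hp, hp.le]

noncomputable def reluLogisticAntideriv (T a p : ℝ) : ℝ :=
  -(p * sigmoid ((a - p) / T)) - T * softplus ((a - p) / T)

lemma hasDerivAt_reluLogisticAntideriv {T : ℝ} (hT : T ≠ 0) (a p : ℝ) :
    HasDerivAt (reluLogisticAntideriv T a) (p * logisticDen T (a - p)) p := by
  have hy : HasDerivAt (fun p => (a - p) / T) (-1 / T) p :=
    ((hasDerivAt_id p).const_sub a).div_const T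
  have hσ := (hasDerivAt_sigmoid _).comp p hy
  have hs := (hasDerivAt_softplus _).comp p hy
  refine (((hasDerivAt_id p).mul hσ).neg.sub (hs.const_mul T)).congr_deriv ?_
  simp only [logisticDen_eq_sigmoid, Function.comp_apply, id]
  field_simp
  ring

lemma tendsto_reluLogisticAntideriv_atTop {T : ℝ} (hT : 0 < T) (a : ℝ) :
    Tendsto (reluLogisticAntideriv T a) atTop (𝓝 0) := by
  have hy : Tendsto (fun p => (a - p) / T) atTop atBot :=
    (tendsto_atBot_add_const_left _ a tendsto_neg_atTop_atBot).atBot_div_const hT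
  -- `p = a - T y` with `y = (a - p) / T → -∞`
  have h := ((tendsto_sigmoid_atBot.comp hy).const_mul a).sub
    ((tendsto_mul_sigmoid_atBot.comp hy).const_mul T)
  have h' := h.neg.sub ((tendsto_softplus_atBot.comp hy).const_mul T)
  simp only [mul_zero, sub_zero, neg_zero] at h'
  refine h'.congr fun p => ?_
  simp only [reluLogisticAntideriv, Function.comp_apply]
  field_simp
  ring

/-- (ReLU * ℓ_T)(a) = T·ln(1 + e^{a/T}). -/
theorem relu_conv_logistic_eq_softplus (T : ℝ) (hT : 0 < T) (a : ℝ) :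
    (∫ p : ℝ, max 0 p * logisticDen T (a - p)) = T * Real.log (1 + Real.exp (a / T)) := by
  have hderiv p := hasDerivAt_reluLogisticAntideriv hT.ne' a p
  rw [integral_max_zero_mul, integral_Ioi_of_hasDerivAt_of_nonneg
    (hderiv 0).continuousAt.continuousWithinAt (fun p _ => hderiv p)
    (fun p hp => mul_nonneg (le_of_lt hp) (logisticDen_nonneg hT.le _))
    (tendsto_reluLogisticAntideriv_atTop hT a)]
  simp [reluLogisticAntideriv, softplus]
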